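/- arXiv:1107.5197 — 2 statements merged into one kernel-verified Lean document; each statement's English description precedes it below -/
import Mathlib

section
/- Let X be a d-dimensional Brownian motion, t > 0, p > 1 with conjugate exponent p*, and M_t ∈ L^p σ(X_t)-measurable. Define f(z) = E[M_t exp((z·X_t − zᵀz/2)/t)] for z ∈ ℂ^d. Then |f(z)| ≤ ‖M_t‖_p exp(((p*−1)∨1)|z|²/(2t)) for all z ∈ ℂ^d; in particular f is an entire function of order at most 2. -/
open MeasureTheory ProbabilityTheory Filter

noncomputable section

/-- Space-time Hermite polynomials `H n t x` (with variance parameter `t`), defined by the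
standard recurrence `H_{n+1}(t,x) = x H_n(t,x) - t n H_{n-1}(t,x)`; equivalently characterized
by the generating function `exp (a x - a² t / 2) = ∑ aⁿ H_n(t,x) / n!`. -/
def hermitePoly : ℕ → ℝ → ℝ → ℝ
  | 0, _, _ => 1
  | 1, _, x => x
  | (n + 2), t, x => x * hermitePoly (n + 1) t x - t * (n + 1) * hermitePoly n t x

/-- `X` is a standard one-dimensional Brownian motion on `(Ω, P)`. -/
def IsBrownianMotion {Ω : Type*} [MeasurableSpace Ω] (P : Measure Ω) (X : ℝ → Ω → ℝ) : Prop :=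
  (∀ ω, X 0 ω = 0) ∧
  (∀ t, Measurable (X t)) ∧
  (∀ ω, Continuous fun t => X t ω) ∧
  (∀ s t : ℝ, 0 ≤ s → s ≤ t →
    Measure.map (fun ω => X t ω - X s ω) P = gaussianReal 0 (Real.toNNReal (t - s))) ∧
  (∀ (n : ℕ) (u : ℕ → ℝ), Monotone u → 0 ≤ u 0 →
    iIndepFun
      (fun i : Fin n => fun ω => X (u (i.1 + 1)) ω - X (u i.1) ω) P)

/-- The sigma-field generated by the process `X` up to time `t`. -/
def pastSigma {Ω : Type*} [MeasurableSpace Ω] (X : ℝ → Ω → ℝ) (t : ℝ) : MeasurableSpace Ω :=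
  ⨆ s ∈ Set.Icc (0 : ℝ) t, MeasurableSpace.comap (X s) inferInstance

/-- `X` is a standard `d`-dimensional Brownian motion: each coordinate is a Brownian motion and
the coordinate processes are independent. -/
def IsBrownianMotionD {Ω : Type*} [MeasurableSpace Ω] (d : ℕ) (P : Measure Ω)
    (X : ℝ → Ω → Fin d → ℝ) : Prop :=
  (∀ i : Fin d, IsBrownianMotion P (fun t ω => X t ω i)) ∧
  iIndep (fun i : Fin d => ⨆ t : ℝ, MeasurableSpace.comap (fun ω => X t ω i) inferInstance) P

open Real
open scoped NNReal ENNReal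

/-! By Hölder's inequality with exponents `p` and `q = p*`, `|f(z)|` is at most `‖M‖_p` times
`‖exp ((z·X_t - zᵀz/2)/t)‖_q`, and `|exp w| = exp (Re w)` turns the latter into an exponential
moment of the Gaussian vector `X_t`. Independence of the coordinates gives
`E exp (a·X_t) = exp (t|a|²/2)`, so with `a = q Re z / t` the `L^q` norm is
`exp ((q |Re z|² - Re zᵀz)/(2t)) = exp (((q - 1)|Re z|² + |Im z|²)/(2t))`. -/

lemma ProbabilityTheory.iIndepFun.mgf_sum_mul_of_map_eq_gaussianReal {Ω ι : Type*}
    [MeasurableSpace Ω] {P : Measure Ω} [Fintype ι] {Y : ι → Ω → ℝ} {v : ℝ≥0}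
    (hind : iIndepFun Y P) (hmeas : ∀ i, Measurable (Y i))
    (hlaw : ∀ i, P.map (Y i) = gaussianReal 0 v) (a : ι → ℝ) :
    mgf (fun ω => ∑ i, a i * Y i ω) P 1 = exp (v * (∑ i, a i ^ 2) / 2) := by
  have hsum := (hind.comp (fun i x => a i * x) fun i => measurable_const_mul (a i)).mgf_sum
    (t := 1) (fun i => (hmeas i).const_mul (a i)) Finset.univ
  simp only [Finset.sum_fn, Function.comp_def] at hsum
  rw [hsum, Finset.mul_sum, Finset.sum_div, exp_sum]
  refine Finset.prod_congr rfl fun i _ => ?_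
  rw [mgf_const_mul, mgf_gaussianReal (hlaw i)]
  congr 1
  ring

section BrownianMotionD

variable {Ω : Type*} [MeasurableSpace Ω] {P : Measure Ω} {d : ℕ} {X : ℝ → Ω → Fin d → ℝ}

lemma IsBrownianMotion.map_eq_gaussianReal {B : ℝ → Ω → ℝ} (hB : IsBrownianMotion P B) {t : ℝ}
    (ht : 0 ≤ t) : P.map (B t) = gaussianReal 0 t.toNNReal := by
  simpa [hB.1] using hB.2.2.2.1 0 t le_rfl ht

lemma IsBrownianMotionD.iIndepFun_apply (hX : IsBrownianMotionD d P X) (t : ℝ) :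
    iIndepFun (fun i ω => X t ω i) P := by
  rw [iIndepFun_iff_iIndep]
  exact iIndep_of_iIndep_of_le hX.2 fun i =>
    le_iSup (fun s => MeasurableSpace.comap (fun ω => X s ω i) _) t

lemma IsBrownianMotionD.mgf_sum_mul (hX : IsBrownianMotionD d P X) {t : ℝ} (ht : 0 ≤ t)
    (a : Fin d → ℝ) :
    mgf (fun ω => ∑ i, a i * X t ω i) P 1 = exp (t * (∑ i, a i ^ 2) / 2) := by
  rw [(hX.iIndepFun_apply t).mgf_sum_mul_of_map_eq_gaussianReal (fun i => (hX.1 i).2.1 t)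
    (fun i => (hX.1 i).map_eq_gaussianReal ht), Real.coe_toNNReal t ht]

lemma IsBrownianMotionD.integrable_exp_sum_mul [IsProbabilityMeasure P]
    (hX : IsBrownianMotionD d P X) {t : ℝ} (ht : 0 ≤ t) (a : Fin d → ℝ) :
    Integrable (fun ω => exp (∑ i, a i * X t ω i)) P := by
  have hpos : 0 < mgf (fun ω => ∑ i, a i * X t ω i) P 1 := hX.mgf_sum_mul ht a ▸ exp_pos _
  simpa only [one_mul] using mgf_pos_iff.mp hpos

lemma IsBrownianMotionD.integral_exp_sum_mul (hX : IsBrownianMotionD d P X) {t : ℝ} (ht : 0 ≤ t)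
    (a : Fin d → ℝ) :
    ∫ ω, exp (∑ i, a i * X t ω i) ∂P = exp (t * (∑ i, a i ^ 2) / 2) := by
  simpa [mgf] using hX.mgf_sum_mul ht a

end BrownianMotionD

lemma integral_norm_mul_le_eLpNorm_mul {α E F : Type*} [MeasurableSpace α] {μ : Measure α}
    [NormedAddCommGroup E] [NormedAddCommGroup F] {p q : ℝ} (hpq : p.HolderConjugate q)
    {f : α → E} {g : α → F} (hf : MemLp f (ENNReal.ofReal p) μ) (hg : AEStronglyMeasurable g μ)
    (hgq : Integrable (fun x => ‖g x‖ ^ q) μ) :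
    ∫ x, ‖f x‖ * ‖g x‖ ∂μ
      ≤ (eLpNorm f (ENNReal.ofReal p) μ).toReal * (∫ x, ‖g x‖ ^ q ∂μ) ^ (1 / q) := by
  have hg' : MemLp (fun x => ‖g x‖) (ENNReal.ofReal q) μ := by
    rw [← integrable_norm_rpow_iff hg.norm (by simpa using hpq.symm.pos) ENNReal.ofReal_ne_top,
      ENNReal.toReal_ofReal hpq.symm.nonneg]
    simpa using hgq
  convert integral_mul_le_Lp_mul_Lq_of_nonneg hpq (ae_of_all _ fun x => norm_nonneg (f x))
    (ae_of_all _ fun x => norm_nonneg (g x)) hf.norm hg' using 2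
  rw [hf.eLpNorm_eq_integral_rpow_norm (by simpa using hpq.pos) ENNReal.ofReal_ne_top,
    ENNReal.toReal_ofReal hpq.nonneg, ENNReal.toReal_ofReal (by positivity), one_div]

lemma Complex.mul_re_sq_sub_re_sq_le (q : ℝ) (z : ℂ) :
    q * z.re ^ 2 - (z ^ 2).re ≤ max (q - 1) 1 * ‖z‖ ^ 2 := by
  rw [sq z, Complex.mul_re, Complex.sq_norm, Complex.normSq_apply]
  nlinarith [le_max_left (q - 1) 1, le_max_right (q - 1) 1, mul_self_nonneg z.re,
    mul_self_nonneg z.im]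

lemma Complex.mul_sum_re_sq_sub_re_sum_sq_le {ι : Type*} (s : Finset ι) (q : ℝ) (z : ι → ℂ) :
    q * ∑ i ∈ s, (z i).re ^ 2 - (∑ i ∈ s, z i ^ 2).re ≤ max (q - 1) 1 * ∑ i ∈ s, ‖z i‖ ^ 2 := by
  rw [Complex.re_sum, Finset.mul_sum, Finset.mul_sum, ← Finset.sum_sub_distrib]
  exact Finset.sum_le_sum fun i _ => Complex.mul_re_sq_sub_re_sq_le q (z i)

lemma norm_cexp_rpow_eq {ι : Type*} [Fintype ι] (q t : ℝ) (z : ι → ℂ) (x : ι → ℝ) :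
    ‖Complex.exp ((∑ i, z i * (x i : ℂ) - (∑ i, z i ^ 2) / 2) / (t : ℂ))‖ ^ q
      = exp (∑ i, q * (z i).re / t * x i) * exp (-(q * (∑ i, z i ^ 2).re) / (2 * t)) := by
  rw [Complex.norm_exp, ← exp_mul, ← exp_add]
  have hsum : ∑ i, q * (z i).re / t * x i = q / t * ∑ i, (z i).re * x i := by
    rw [Finset.mul_sum]
    exact Finset.sum_congr rfl fun i _ => by ring
  rw [hsum, Complex.div_ofReal_re, Complex.sub_re, Complex.re_sum, Complex.div_ofNat_re]
  simp_rw [Complex.re_mul_ofReal]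
  congr 1
  ring

theorem widder_type_growth_bound_general {Ω : Type*} [MeasurableSpace Ω] (P : Measure Ω)
    [IsProbabilityMeasure P] {d : ℕ} (X : ℝ → Ω → Fin d → ℝ) (hX : IsBrownianMotionD d P X)
    (t p : ℝ) (ht : 0 < t) (hp : 1 < p)
    (M : Ω → ℝ) (hM : MemLp M (ENNReal.ofReal p) P)
    (z : Fin d → ℂ) :
    ‖(∫ ω, (M ω : ℂ) *
          Complex.exp ((∑ i, z i * (X t ω i : ℂ) - (∑ i, (z i) ^ 2) / 2) / (t : ℂ)) ∂P)‖
      ≤ (eLpNorm M (ENNReal.ofReal p) P).toReal *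
        Real.exp (max (p / (p - 1) - 1) 1 * (∑ i, ‖z i‖ ^ 2) / (2 * t)) := by
  set q := p / (p - 1)
  have hpq : p.HolderConjugate q := .conjExponent hp
  have hXmeas : ∀ i, Measurable fun ω => X t ω i := fun i => (hX.1 i).2.1 t
  have hmoment (ω : Ω) := norm_cexp_rpow_eq q t z (X t ω)
  calc _ ≤ ∫ ω, ‖(M ω : ℂ) *
          Complex.exp ((∑ i, z i * (X t ω i : ℂ) - (∑ i, (z i) ^ 2) / 2) / (t : ℂ))‖ ∂P :=
        norm_integral_le_integral_norm _
    _ = ∫ ω, ‖M ω‖ *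
          ‖Complex.exp ((∑ i, z i * (X t ω i : ℂ) - (∑ i, (z i) ^ 2) / 2) / (t : ℂ))‖ ∂P := by
        simp only [norm_mul, Complex.norm_real]
    _ ≤ _ := integral_norm_mul_le_eLpNorm_mul hpq hM (by fun_prop) (by
        simp_rw [hmoment]; exact (hX.integrable_exp_sum_mul ht.le _).mul_const _)
    _ = (eLpNorm M (ENNReal.ofReal p) P).toReal *
          exp ((q * ∑ i, (z i).re ^ 2 - (∑ i, z i ^ 2).re) / (2 * t)) := by
        simp_rw [hmoment]
        rw [integral_mul_const, hX.integral_exp_sum_mul ht.le, ← exp_add, ← exp_mul]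
        congr 2
        simp_rw [div_pow, mul_pow, ← Finset.sum_div, ← Finset.mul_sum]
        field_simp [hpq.symm.ne_zero, ht.ne']
        ring
    _ ≤ _ := by
        gcongr
        exact Complex.mul_sum_re_sq_sub_re_sum_sq_le _ q z

/-- for `M ∈ L^p` measurable w.r.t. `σ(X_t)`, the function
`f(z) = E[M exp((z·X_t − zᵀz/2)/t)]` satisfies
`|f(z)| ≤ ‖M‖_p exp(((p*−1) ∨ 1) |z|² / (2t))`, so `f` is entire of order at most 2. -/
theorem widder_type_growth_bound {Ω : Type*} [MeasurableSpace Ω] (P : Measure Ω)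
    [IsProbabilityMeasure P] {d : ℕ} (X : ℝ → Ω → Fin d → ℝ) (hX : IsBrownianMotionD d P X)
    (t p : ℝ) (ht : 0 < t) (hp : 1 < p)
    (M : Ω → ℝ) (hM : MemLp M (ENNReal.ofReal p) P)
    (hMmeas : Measurable[MeasurableSpace.comap (X t) inferInstance] M)
    (z : Fin d → ℂ) :
    ‖(∫ ω, (M ω : ℂ) *
          Complex.exp ((∑ i, z i * (X t ω i : ℂ) - (∑ i, (z i) ^ 2) / 2) / (t : ℂ)) ∂P)‖
      ≤ (eLpNorm M (ENNReal.ofReal p) P).toReal *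
        Real.exp (max (p / (p - 1) - 1) 1 * (∑ i, ‖z i‖ ^ 2) / (2 * t)) :=
  widder_type_growth_bound_general P X hX t p ht hp M hM z
end
end

section
/- Let X be a d-dimensional Brownian motion and μ a nonnegative finite measure on ℝ^d such that for all t ≥ 0, ∫∫ e^{t (v·w)} μ(dv) μ(dw) < ∞. Then μ has quadratic exponential moments of all orders: ∫ e^{λ|v|²} μ(dv) < ∞ for every λ > 0. -/
open MeasureTheory ProbabilityTheory Filter

noncomputable section

/-! Two vectors in the same orthant have `v i * w i ≥ 0` for every `i`, so `v ⬝ᵥ w ≥ K` as soon as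
both have `i`-th coordinate of square at least `K`. For the set `A` of such vectors, Chernoff's
bound for `μ ⊗ μ` gives `μ(A)² ≤ e^{-tK} ∫∫ e^{t v ⬝ᵥ w}`. Covering `{|v|² ≥ K}` by `d 2^d` such
sets (index `i` with `v_i² ≥ K/d`, sign pattern) yields a tail `μ(|v|² ≥ K) = O(e^{-tK/(2d)})`;
since `t` is arbitrary, summing `e^{λ|v|²}` over the integer layers of `|v|²` gives a convergent
geometric series. -/

open Real ENNReal

section ExpMoments

variable {α : Type*} [MeasurableSpace α]

theorem measure_ge_le_exp_mul_lintegral_exp (ν : Measure α) {g : α → ℝ} (hg : AEMeasurable g ν)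
    {t : ℝ} (ht : 0 ≤ t) (K : ℝ) :
    ν {x | K ≤ g x} ≤
      ENNReal.ofReal (exp (-(t * K))) * ∫⁻ x, ENNReal.ofReal (exp (t * g x)) ∂ν := by
  have hsub : {x | K ≤ g x} ⊆ {x | 1 ≤ ENNReal.ofReal (exp (t * (g x - K)))} := fun x hx => by
    simpa [ENNReal.one_le_ofReal, one_le_exp_iff] using mul_nonneg ht (sub_nonneg.2 hx)
  calc ν {x | K ≤ g x}
      ≤ 1 * ν {x | 1 ≤ ENNReal.ofReal (exp (t * (g x - K)))} := by
        rw [one_mul]; exact measure_mono hsub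
    _ ≤ ∫⁻ x, ENNReal.ofReal (exp (t * (g x - K))) ∂ν :=
        mul_meas_ge_le_lintegral₀ (by fun_prop) 1
    _ = ∫⁻ x, ENNReal.ofReal (exp (-(t * K))) * ENNReal.ofReal (exp (t * g x)) ∂ν := by
        congr with x
        rw [← ENNReal.ofReal_mul (exp_pos _).le, ← exp_add]
        ring_nf
    _ = _ := lintegral_const_mul' _ _ ofReal_ne_top

theorem lintegral_exp_mul_le_tsum (ν : Measure α) {f : α → ℝ} (hf : Measurable f) (hf0 : 0 ≤ f)
    {lam : ℝ} (hlam : 0 ≤ lam) :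
    ∫⁻ x, ENNReal.ofReal (exp (lam * f x)) ∂ν ≤
      ∑' n : ℕ, ENNReal.ofReal (exp (lam * (n + 1))) * ν {x | n ≤ f x} := by
  have hmeas (n : ℕ) : MeasurableSet {x | (n : ℝ) ≤ f x} := measurableSet_le measurable_const hf
  calc ∫⁻ x, ENNReal.ofReal (exp (lam * f x)) ∂ν
      ≤ ∫⁻ x, ∑' n : ℕ, {x | (n : ℝ) ≤ f x}.indicator
          (fun _ => ENNReal.ofReal (exp (lam * (n + 1)))) x ∂ν := by
        refine lintegral_mono fun x => le_trans ?_ (ENNReal.le_tsum ⌊f x⌋₊)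
        rw [Set.indicator_of_mem (show x ∈ {y | (⌊f x⌋₊ : ℝ) ≤ f y} from Nat.floor_le (hf0 x))]
        gcongr
        exact (Nat.lt_floor_add_one _).le
    _ = _ := by
        rw [lintegral_tsum fun n => (measurable_const.indicator (hmeas n)).aemeasurable]
        exact tsum_congr fun n => lintegral_indicator_const (hmeas n) _

theorem lintegral_exp_mul_lt_top_of_measure_le (ν : Measure α) {f : α → ℝ} (hf : Measurable f)
    (hf0 : 0 ≤ f) {lam c : ℝ} (hlam : 0 ≤ lam) (hc : lam < c) {D : ℝ≥0∞} (hD : D ≠ ∞)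
    (htail : ∀ n : ℕ, ν {x | n ≤ f x} ≤ D * ENNReal.ofReal (exp (-(c * n)))) :
    ∫⁻ x, ENNReal.ofReal (exp (lam * f x)) ∂ν < ∞ := by
  have hterm (n : ℕ) : ENNReal.ofReal (exp (lam * (n + 1))) * ENNReal.ofReal (exp (-(c * n))) =
      ENNReal.ofReal (exp lam) * ENNReal.ofReal (exp (lam - c)) ^ n := by
    rw [← ENNReal.ofReal_pow (exp_pos _).le, ← ENNReal.ofReal_mul (exp_pos _).le,
      ← ENNReal.ofReal_mul (exp_pos _).le, ← exp_nat_mul, ← exp_add, ← exp_add]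
    ring_nf
  have hratio : ENNReal.ofReal (exp (lam - c)) < 1 := by
    simpa [ENNReal.ofReal_lt_one] using hc
  calc ∫⁻ x, ENNReal.ofReal (exp (lam * f x)) ∂ν
      ≤ ∑' n : ℕ, ENNReal.ofReal (exp (lam * (n + 1))) * (D * ENNReal.ofReal (exp (-(c * n)))) :=
        (lintegral_exp_mul_le_tsum ν hf hf0 hlam).trans (ENNReal.tsum_le_tsum fun n => by
          gcongr; exact htail n)
    _ = D * ENNReal.ofReal (exp lam) * ∑' n : ℕ, ENNReal.ofReal (exp (lam - c)) ^ n := by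
        rw [← ENNReal.tsum_mul_left]
        exact tsum_congr fun n => by rw [mul_left_comm, hterm, mul_assoc]
    _ < ∞ := mul_lt_top (mul_lt_top hD.lt_top ofReal_lt_top)
        (tsum_geometric_lt_top.2 hratio)

end ExpMoments

section Orthant

variable {ι : Type*} [Fintype ι]

def orthant (s : Finset ι) : Set (ι → ℝ) := {v | ∀ j, 0 ≤ v j ↔ j ∈ s}

open Classical in
theorem mem_orthant_filter_nonneg (v : ι → ℝ) : v ∈ orthant {j | 0 ≤ v j} := fun j => by
  simp

theorem le_dotProduct_of_mem_orthant {s : Finset ι} {v w : ι → ℝ} (hv : v ∈ orthant s)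
    (hw : w ∈ orthant s) {K : ℝ} (hK : 0 ≤ K) {i : ι} (hvi : K ≤ v i ^ 2) (hwi : K ≤ w i ^ 2) :
    K ≤ v ⬝ᵥ w := by
  have hnn (j : ι) : 0 ≤ v j * w j := by
    by_cases hj : j ∈ s
    · exact mul_nonneg ((hv j).2 hj) ((hw j).2 hj)
    · exact mul_nonneg_of_nonpos_of_nonpos (not_le.1 (mt (hv j).1 hj)).le
        (not_le.1 (mt (hw j).1 hj)).le
  calc K ≤ v i * w i := by nlinarith [hnn i]
    _ ≤ v ⬝ᵥ w := Finset.single_le_sum (fun j _ => hnn j) (Finset.mem_univ i)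

end Orthant

section ExpDotMoment

variable {ι : Type*} [Fintype ι] (μ : Measure (ι → ℝ)) [SFinite μ]

def expDotMoment (t : ℝ) : ℝ≥0∞ :=
  ∫⁻ v, ∫⁻ w, ENNReal.ofReal (exp (t * v ⬝ᵥ w)) ∂μ ∂μ

theorem measure_prod_dotProduct_ge_le {t : ℝ} (ht : 0 ≤ t) (K : ℝ) :
    μ.prod μ {q | K ≤ q.1 ⬝ᵥ q.2} ≤ ENNReal.ofReal (exp (-(t * K))) * expDotMoment μ t := by
  have hdot : Measurable fun q : (ι → ℝ) × (ι → ℝ) => q.1 ⬝ᵥ q.2 := by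
    unfold dotProduct; fun_prop
  refine (measure_ge_le_exp_mul_lintegral_exp _ hdot.aemeasurable ht K).trans_eq ?_
  rw [expDotMoment, lintegral_prod _ (by fun_prop)]

theorem measure_orthant_inter_sq_ge_le (s : Finset ι) (i : ι) {K t : ℝ} (hK : 0 ≤ K)
    (ht : 0 ≤ t) :
    μ (orthant s ∩ {v | K ≤ v i ^ 2}) ≤
      expDotMoment μ t ^ (2⁻¹ : ℝ) * ENNReal.ofReal (exp (-(t / 2 * K))) := by
  set A := orthant s ∩ {v | K ≤ v i ^ 2}
  have hsq : μ A ^ (2 : ℝ) ≤ ENNReal.ofReal (exp (-(t * K))) * expDotMoment μ t := by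
    rw [ENNReal.rpow_two, sq, ← Measure.prod_prod]
    refine (measure_mono fun q hq => ?_).trans (measure_prod_dotProduct_ge_le μ ht K)
    exact le_dotProduct_of_mem_orthant hq.1.1 hq.2.1 hK hq.1.2 hq.2.2
  refine ((ENNReal.le_rpow_inv_iff two_pos).2 hsq).trans_eq ?_
  rw [ENNReal.mul_rpow_of_nonneg _ _ (by norm_num), mul_comm,
    ENNReal.ofReal_rpow_of_nonneg (exp_pos _).le (by norm_num), ← exp_mul]
  ring_nf

theorem measure_sum_sq_ge_le [Nonempty ι] {K t : ℝ} (hK : 0 ≤ K) (ht : 0 ≤ t) :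
    μ {v | K ≤ ∑ i, v i ^ 2} ≤
      Fintype.card ι * 2 ^ Fintype.card ι * expDotMoment μ t ^ (2⁻¹ : ℝ) *
        ENNReal.ofReal (exp (-(t / (2 * Fintype.card ι) * K))) := by
  set K' := K / Fintype.card ι
  have hK' : 0 ≤ K' := by positivity
  have hcover : {v : ι → ℝ | K ≤ ∑ i, v i ^ 2} ⊆
      ⋃ p : ι × Finset ι, orthant p.2 ∩ {v | K' ≤ v p.1 ^ 2} := fun v hv => by
    obtain ⟨i, -, hi⟩ : ∃ i ∈ Finset.univ, K' ≤ v i ^ 2 := by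
      refine Finset.exists_le_of_sum_le Finset.univ_nonempty (le_of_eq_of_le ?_ hv)
      simp [K', mul_div_cancel₀]
    classical
    exact Set.mem_iUnion.2 ⟨⟨i, ({j | 0 ≤ v j} : Finset ι)⟩, mem_orthant_filter_nonneg v, hi⟩
  calc μ {v | K ≤ ∑ i, v i ^ 2}
      ≤ ∑ p : ι × Finset ι, μ (orthant p.2 ∩ {v | K' ≤ v p.1 ^ 2}) :=
        (measure_mono hcover).trans (measure_iUnion_fintype_le _ _)
    _ ≤ ∑ _p : ι × Finset ι,
          expDotMoment μ t ^ (2⁻¹ : ℝ) * ENNReal.ofReal (exp (-(t / 2 * K'))) :=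
        Finset.sum_le_sum fun p _ => measure_orthant_inter_sq_ge_le μ p.2 p.1 hK' ht
    _ = _ := by
        simp only [Finset.sum_const, Finset.card_univ, Fintype.card_prod, Fintype.card_finset,
          nsmul_eq_mul, K']
        push_cast
        rw [mul_assoc]
        ring_nf

end ExpDotMoment

theorem quadratic_exponential_moments_general {d : ℕ} (μ : Measure (Fin d → ℝ)) [IsFiniteMeasure μ]
    (h : ∀ t : ℝ, 0 ≤ t →
      (∫⁻ v, ∫⁻ w, ENNReal.ofReal (Real.exp (t * ∑ i, v i * w i)) ∂μ ∂μ) < ⊤) :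
    ∀ lam : ℝ, 0 < lam → (∫⁻ v, ENNReal.ofReal (Real.exp (lam * ∑ i, v i ^ 2)) ∂μ) < ⊤ := by
  intro lam hlam
  rcases isEmpty_or_nonempty (Fin d) with hd | hd
  · simp [measure_lt_top]
  have ht : 0 ≤ 4 * d * lam := by positivity
  have hD : (d * 2 ^ d * expDotMoment μ (4 * d * lam) ^ (2⁻¹ : ℝ) : ℝ≥0∞) ≠ ∞ :=
    mul_ne_top (by finiteness) (rpow_ne_top_of_nonneg (by norm_num) (h _ ht).ne)
  refine lintegral_exp_mul_lt_top_of_measure_le μ (by fun_prop)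
    (fun v => Finset.sum_nonneg fun i _ => sq_nonneg (v i)) hlam.le (lt_two_mul_self hlam) hD
    fun n => (measure_sum_sq_ge_le μ n.cast_nonneg ht).trans_eq ?_
  have hd0 : (d : ℝ) ≠ 0 := Nat.cast_ne_zero.2 Fin.pos'.ne'
  simp only [Fintype.card_fin]
  field_simp
  ring_nf

/-- if a nonnegative finite measure `μ` on `ℝ^d` satisfies
`∫∫ e^{t(v·w)} μ(dv) μ(dw) < ∞` for all `t ≥ 0`, then `μ` has quadratic exponential moments of
all orders: `∫ e^{λ|v|²} μ(dv) < ∞` for every `λ > 0`. -/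
theorem quadratic_exponential_moments {Ω : Type*} [MeasurableSpace Ω] (P : Measure Ω)
    [IsProbabilityMeasure P] {d : ℕ} (X : ℝ → Ω → Fin d → ℝ) (hX : IsBrownianMotionD d P X)
    (μ : Measure (Fin d → ℝ)) [IsFiniteMeasure μ]
    (h : ∀ t : ℝ, 0 ≤ t →
      (∫⁻ v, ∫⁻ w, ENNReal.ofReal (Real.exp (t * ∑ i, v i * w i)) ∂μ ∂μ) < ⊤) :
    ∀ lam : ℝ, 0 < lam → (∫⁻ v, ENNReal.ofReal (Real.exp (lam * ∑ i, v i ^ 2)) ∂μ) < ⊤ :=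
  quadratic_exponential_moments_general μ h
end
end
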